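/- For every graph G and every vertex v ∈ V(G) with γ(G) = θ(G), there exists a minimum dominating set D of G containing v. -/

import Mathlib

open SimpleGraph

variable {V : Type*}

/-- `D` is a dominating set of `G`: every vertex not in `D` has a neighbor in `D`. -/
def IsDomSet (G : SimpleGraph V) (D : Finset V) : Prop :=
  ∀ v : V, v ∉ D → ∃ u ∈ D, G.Adj u v

/-- The domination number `γ(G)`. -/
noncomputable def domNum [Fintype V] (G : SimpleGraph V) : ℕ :=
  sInf {n | ∃ D : Finset V, IsDomSet G D ∧ D.card = n}

/-- `P` is a partition of the vertex set of `G` into cliques. -/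
def IsCliquePartition (G : SimpleGraph V) (P : Finset (Finset V)) : Prop :=
  (∀ C ∈ P, G.IsClique (C : Set V)) ∧ ∀ v : V, ∃! C : Finset V, C ∈ P ∧ v ∈ C

/-- The clique covering number `θ(G)`. -/
noncomputable def cliqueCoverNum [Fintype V] (G : SimpleGraph V) : ℕ :=
  sInf {n | ∃ P : Finset (Finset V), IsCliquePartition G P ∧ P.card = n}

/-! Picking one vertex from every clique of a clique partition dominates the graph, and the
vertex picked from the clique containing `v` may be `v` itself. Hence `γ(G) ≤ θ(G)` is witnessed
by a dominating set through any prescribed vertex; when `γ(G) = θ(G)` that set is minimum. -/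

theorem domNum_le_card {G : SimpleGraph V} [Fintype V] {D : Finset V} (hD : IsDomSet G D) :
    domNum G ≤ D.card :=
  Nat.sInf_le ⟨D, hD, rfl⟩

theorem isCliquePartition_singletons [Fintype V] [DecidableEq V] (G : SimpleGraph V) :
    IsCliquePartition G (Finset.univ.image singleton) := by
  refine ⟨?_, fun v => ⟨{v}, by simp, ?_⟩⟩
  · simp
  · rintro C ⟨hC, hvC⟩
    obtain ⟨u, -, rfl⟩ := Finset.mem_image.mp hC
    simpa using (Finset.mem_singleton.mp hvC).symm

theorem exists_isCliquePartition_card_eq_cliqueCoverNum [Fintype V] (G : SimpleGraph V) :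
    ∃ P : Finset (Finset V), IsCliquePartition G P ∧ P.card = cliqueCoverNum G := by
  classical
  exact Nat.sInf_mem (s := {n | ∃ P : Finset (Finset V), IsCliquePartition G P ∧ P.card = n})
    ⟨_, _, isCliquePartition_singletons G, rfl⟩

theorem IsCliquePartition.exists_isDomSet_mem_card_le {G : SimpleGraph V}
    {P : Finset (Finset V)} (hP : IsCliquePartition G P) (v : V) :
    ∃ D : Finset V, IsDomSet G D ∧ v ∈ D ∧ D.card ≤ P.card := by
  classical
  have : Nonempty V := ⟨v⟩
  let rep : Finset V → V := fun C => if v ∈ C then v else Classical.epsilon (· ∈ C)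
  have rep_mem : ∀ {C : Finset V} {u : V}, u ∈ C → rep C ∈ C := by
    intro C u hu
    by_cases hv : v ∈ C
    · simp [rep, hv]
    · simpa [rep, hv] using Classical.epsilon_spec ⟨u, hu⟩
  refine ⟨P.image rep, ?dom, ?mem, Finset.card_image_le⟩
  case dom =>
    intro u hu
    obtain ⟨C, ⟨hCP, huC⟩, -⟩ := hP.2 u
    have hrep : rep C ∈ P.image rep := Finset.mem_image_of_mem rep hCP
    exact ⟨rep C, hrep, hP.1 C hCP (rep_mem huC) huC fun h => hu (h ▸ hrep)⟩
  case mem =>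
    obtain ⟨C, ⟨hCP, hvC⟩, -⟩ := hP.2 v
    exact Finset.mem_image.mpr ⟨C, hCP, by simp [rep, hvC]⟩

/-- If `γ(G) = θ(G)`, then every vertex lies in some minimum dominating set. -/
theorem stmt_12 [Fintype V] (G : SimpleGraph V)
    (hgt : domNum G = cliqueCoverNum G) (v : V) :
    ∃ D : Finset V, IsDomSet G D ∧ D.card = domNum G ∧ v ∈ D := by
  obtain ⟨P, hP, hcard⟩ := exists_isCliquePartition_card_eq_cliqueCoverNum G
  obtain ⟨D, hD, hvD, hDP⟩ := hP.exists_isDomSet_mem_card_le v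
  exact ⟨D, hD, le_antisymm (hDP.trans (hcard.trans hgt.symm).le) (domNum_le_card hD), hvD⟩
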